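/- arXiv:2511.14516 — 3 statements merged into one kernel-verified Lean document; each statement's English description precedes it below -/
import Mathlib

section
/- If μ_{i-1} | data has distribution N((α' x + μ_0 ρ_0)/(ρ_0 + α'), α'/(ρ_0 + α')²) with α' = β(t_{i-1}), and μ_i = (ρ_{i-1} μ_{i-1} + α_i y)/(ρ_{i-1} + α_i) where y ~ N(x, 1/α_i) independently and ρ_{i-1} = ρ_0 + β(t_{i-1}), then μ_i has distribution N((β(t_i) x + μ_0 ρ_0)/(ρ_0 + β(t_i)), β(t_i)/(ρ_0 + β(t_i))²), where β(t_i) = β(t_{i-1}) + α_i. -/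
open MeasureTheory ProbabilityTheory
open scoped NNReal

/-!
The update `μ_i = (ρ μ_{i-1} + α y) / (ρ + α)` is a linear combination of two independent
Gaussians, hence Gaussian with mean `(ρ m + α x) / (ρ + α)` and variance
`(ρ² v + α² α⁻¹) / (ρ + α)²`. With `ρ = ρ₀ + β'`, `m = (β' x + μ₀ ρ₀) / ρ` and `v = β' / ρ²`
these become the posterior parameters for accuracy `β' + α`.
-/

namespace ProbabilityTheory

variable {Ω : Type*} {mΩ : MeasurableSpace Ω} {P : Measure Ω} {X Y : Ω → ℝ}
  {m₁ m₂ : ℝ} {v₁ v₂ : ℝ≥0}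

lemma hasLaw_gaussianReal_of_map_eq (hX : P.map X = gaussianReal m₁ v₁) :
    HasLaw X (gaussianReal m₁ v₁) P :=
  ⟨.of_map_ne_zero (hX ▸ IsProbabilityMeasure.ne_zero _), hX⟩

lemma IndepFun.hasLaw_const_mul_add_const_mul_gaussianReal (hXY : IndepFun X Y P)
    (hX : HasLaw X (gaussianReal m₁ v₁) P) (hY : HasLaw Y (gaussianReal m₂ v₂) P) (a b : ℝ) :
    HasLaw (fun ω ↦ a * X ω + b * Y ω)
      (gaussianReal (a * m₁ + b * m₂)
        (.mk (a ^ 2) (sq_nonneg _) * v₁ + .mk (b ^ 2) (sq_nonneg _) * v₂)) P where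
  aemeasurable := by fun_prop
  map_eq :=
    gaussianReal_add_gaussianReal_of_indepFun
      (hXY.comp (measurable_const_mul a) (measurable_const_mul b))
      (gaussianReal_const_mul hX a).map_eq (gaussianReal_const_mul hY b).map_eq

end ProbabilityTheory

theorem stmt_2_general {Ω : Type*} [MeasurableSpace Ω] (P : Measure Ω)
    (x μ₀ ρ₀ α β' : ℝ) (hρ₀ : 0 < ρ₀) (hα : 0 < α) (hβ' : 0 ≤ β')
    (A Y : Ω → ℝ) (hAY : IndepFun A Y P)
    (hA : Measure.map A P =
      gaussianReal ((β' * x + μ₀ * ρ₀) / (ρ₀ + β')) (Real.toNNReal (β' / (ρ₀ + β') ^ 2)))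
    (hY : Measure.map Y P = gaussianReal x (Real.toNNReal α⁻¹)) :
    Measure.map (fun ω => ((ρ₀ + β') * A ω + α * Y ω) / ((ρ₀ + β') + α)) P =
      gaussianReal (((β' + α) * x + μ₀ * ρ₀) / (ρ₀ + (β' + α)))
        (Real.toNNReal ((β' + α) / (ρ₀ + (β' + α)) ^ 2)) := by
  have hρ : 0 < ρ₀ + β' := by positivity
  have hupdate := (hAY.hasLaw_const_mul_add_const_mul_gaussianReal
    (hasLaw_gaussianReal_of_map_eq hA) (hasLaw_gaussianReal_of_map_eq hY)
    ((ρ₀ + β') / (ρ₀ + β' + α)) (α / (ρ₀ + β' + α))).map_eq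
  convert hupdate using 2
  · funext ω
    field_simp
  · field_simp
    ring
  · ext
    push_cast [Real.coe_toNNReal _ (by positivity : 0 ≤ β' / (ρ₀ + β') ^ 2),
      Real.coe_toNNReal _ (inv_nonneg.mpr hα.le),
      Real.coe_toNNReal _ (by positivity : 0 ≤ (β' + α) / (ρ₀ + (β' + α)) ^ 2)]
    field_simp
    ring

/-- Additivity of Bayesian updates for the mean parameter of a Gaussian component:
if `μ_{i-1} ~ N((β' x + μ₀ρ₀)/(ρ₀+β'), β'/(ρ₀+β')²)` with `β' = β(t_{i-1})`, and
`μ_i = (ρ_{i-1} μ_{i-1} + α y)/(ρ_{i-1} + α)` with `y ~ N(x, 1/α)` independent and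
`ρ_{i-1} = ρ₀ + β'`, then `μ_i ~ N((β(t_i) x + μ₀ρ₀)/(ρ₀+β(t_i)), β(t_i)/(ρ₀+β(t_i))²)`,
where `β(t_i) = β' + α`. -/
theorem stmt_2 {Ω : Type*} [MeasurableSpace Ω] (P : Measure Ω) [IsProbabilityMeasure P]
    (x μ₀ ρ₀ α β' : ℝ) (hρ₀ : 0 < ρ₀) (hα : 0 < α) (hβ' : 0 ≤ β')
    (A Y : Ω → ℝ) (hAY : IndepFun A Y P)
    (hA : Measure.map A P =
      gaussianReal ((β' * x + μ₀ * ρ₀) / (ρ₀ + β')) (Real.toNNReal (β' / (ρ₀ + β') ^ 2)))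
    (hY : Measure.map Y P = gaussianReal x (Real.toNNReal α⁻¹)) :
    Measure.map (fun ω => ((ρ₀ + β') * A ω + α * Y ω) / ((ρ₀ + β') + α)) P =
      gaussianReal (((β' + α) * x + μ₀ * ρ₀) / (ρ₀ + (β' + α)))
        (Real.toNNReal ((β' + α) / (ρ₀ + (β' + α)) ^ 2)) :=
  stmt_2_general P x μ₀ ρ₀ α β' hρ₀ hα hβ' A Y hAY hA hY
end

section
/- Let p_A and p_B be Matrix Fisher distributions on SO(3) with parameters XλI and X'λI respectively, where X, X' ∈ SO(3) and λ > 0. Then the KL divergence satisfies D_KL(p_A ‖ p_B) = λ · E_{Q ~ M(λI)}[tr(Q) − tr(ΔᵀQ)] where Δ = XᵀX', and if E_{Q ~ M(λI)}[Q] = a(λ)I then D_KL(p_A ‖ p_B) = λ a(λ)(3 − tr(Δ)). -/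
open Matrix MeasureTheory

instance : MeasurableSpace (Matrix (Fin 3) (Fin 3) ℝ) :=
  inferInstanceAs (MeasurableSpace (Fin 3 → Fin 3 → ℝ))

def IsSO3 (M : Matrix (Fin 3) (Fin 3) ℝ) : Prop := Mᵀ * M = 1 ∧ M.det = 1

/-!
Both densities share the constant `c`, so the log-ratio is `λ (tr(XᵀR) − tr(X'ᵀR))`, and the
left invariance of `ν` under `R ↦ XR` turns the KL integral into an expectation under `M(λI)`
of `tr Q − tr(ΔᵀQ) = tr((1 − Δ)ᵀQ)`. This is linear in the entries of `Q`, so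
`E[Q] = a I` gives `a tr(1 − Δ)`. The integrability needed for that linearity comes from the
entries of an orthogonal matrix being bounded by `1`; `ν` is finite because the integrand of `c`
is bounded below by `exp(−3|λ|)` on SO(3) and `c ≠ 0`.
-/

instance : BorelSpace (Matrix (Fin 3) (Fin 3) ℝ) :=
  inferInstanceAs (BorelSpace (Fin 3 → Fin 3 → ℝ))

lemma Matrix.trace_transpose_mul_eq_sum {m n R : Type*} [Fintype m] [Fintype n]
    [NonUnitalNonAssocSemiring R] (A B : Matrix m n R) :
    (Aᵀ * B).trace = ∑ i, ∑ j, A i j * B i j := by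
  simp only [trace, diag, mul_apply, transpose_apply]
  exact Finset.sum_comm

lemma Matrix.trace_sub_trace_transpose_mul {n R : Type*} [Fintype n] [DecidableEq n] [Ring R]
    (A B : Matrix n n R) : B.trace - (Aᵀ * B).trace = ((1 - A)ᵀ * B).trace := by
  rw [transpose_sub, transpose_one, Matrix.sub_mul, Matrix.one_mul, trace_sub]

lemma Real.log_exp_div_div_exp_div {c : ℝ} (hc : c ≠ 0) (u v : ℝ) :
    Real.log ((Real.exp u / c) / (Real.exp v / c)) = u - v := by
  rw [div_div_div_cancel_right₀ hc, ← Real.exp_sub, Real.log_exp]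

theorem MeasureTheory.MeasurePreserving.integral_comp_of_aestronglyMeasurable
    {α β E : Type*} [MeasurableSpace α] [MeasurableSpace β] [NormedAddCommGroup E]
    [NormedSpace ℝ E] {μ : Measure α} {ν : Measure β} {φ : α → β}
    (hφ : MeasurePreserving φ μ ν) {g : β → E} (hg : AEStronglyMeasurable g ν) :
    ∫ x, g (φ x) ∂μ = ∫ y, g y ∂ν := by
  rw [← integral_map hφ.measurable.aemeasurable (hφ.map_eq ▸ hg), hφ.map_eq]

lemma MeasureTheory.isFiniteMeasure_of_integrable_of_ae_le {α : Type*} [MeasurableSpace α]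
    {μ : Measure α} {f : α → ℝ} (hf : Integrable f μ) {ε : ℝ} (hε : 0 < ε)
    (hle : ∀ᵐ x ∂μ, ε ≤ f x) : IsFiniteMeasure μ :=
  (integrable_const_iff_isFiniteMeasure hε.ne').1 <|
    hf.mono' aestronglyMeasurable_const <| hle.mono fun x hx => by rwa [Real.norm_of_nonneg hε.le]

section Orthogonal

variable {n : Type*} [Fintype n] [DecidableEq n] {M : Matrix n n ℝ}

lemma Matrix.abs_apply_le_one_of_transpose_mul_self (hM : Mᵀ * M = 1) (i j : n) :
    |M i j| ≤ 1 :=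
  entry_norm_bound_of_unitary ((mem_unitaryGroup_iff' (α := ℝ)).2 (by
    rwa [star_eq_conjTranspose, conjTranspose_eq_transpose_of_trivial])) i j

lemma Matrix.abs_trace_le_of_transpose_mul_self (hM : Mᵀ * M = 1) :
    |M.trace| ≤ Fintype.card n :=
  calc |M.trace| ≤ ∑ i, |M i i| := Finset.abs_sum_le_sum_abs _ _
    _ ≤ ∑ _i : n, 1 :=
      Finset.sum_le_sum fun i _ => abs_apply_le_one_of_transpose_mul_self hM i i
    _ = Fintype.card n := by simp

lemma Matrix.abs_mul_trace_le_of_transpose_mul_self (hM : Mᵀ * M = 1) (l : ℝ) :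
    |l * M.trace| ≤ |l| * Fintype.card n := by
  rw [abs_mul]
  exact mul_le_mul_of_nonneg_left (abs_trace_le_of_transpose_mul_self hM) (abs_nonneg l)

variable [MeasurableSpace (Matrix n n ℝ)] {ν : Measure (Matrix n n ℝ)}

lemma isFiniteMeasure_of_integrable_exp_mul_trace (hsupp : ∀ᵐ R ∂ν, Rᵀ * R = 1) {l : ℝ}
    (hint : Integrable (fun R => Real.exp (l * R.trace)) ν) : IsFiniteMeasure ν :=
  isFiniteMeasure_of_integrable_of_ae_le hint (Real.exp_pos (-(|l| * Fintype.card n))) <|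
    hsupp.mono fun _ hR => Real.exp_le_exp.2 <|
      neg_le_of_abs_le (abs_mul_trace_le_of_transpose_mul_self hR l)

lemma integrable_exp_mul_trace_div_mul_apply [BorelSpace (Matrix n n ℝ)] [IsFiniteMeasure ν]
    (hsupp : ∀ᵐ R ∂ν, Rᵀ * R = 1) (l c : ℝ) (i j : n) :
    Integrable (fun R => Real.exp (l * R.trace) / c * R i j) ν := by
  refine Integrable.of_bound (Continuous.aestronglyMeasurable (by fun_prop))
    (Real.exp (|l| * Fintype.card n) / |c|) (hsupp.mono fun R hR => ?_)
  have hexp : Real.exp (l * R.trace) ≤ Real.exp (|l| * Fintype.card n) :=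
    Real.exp_le_exp.2 (le_of_abs_le (abs_mul_trace_le_of_transpose_mul_self hR l))
  rw [norm_mul, norm_div, Real.norm_of_nonneg (Real.exp_pos _).le, Real.norm_eq_abs,
    Real.norm_eq_abs]
  calc Real.exp (l * R.trace) / |c| * |R i j| ≤ Real.exp (l * R.trace) / |c| * 1 := by
        gcongr; exact abs_apply_le_one_of_transpose_mul_self hR i j
    _ ≤ Real.exp (|l| * Fintype.card n) / |c| := by rw [mul_one]; gcongr

end Orthogonal

lemma integral_trace_transpose_mul_mul_of_integral_mul_apply {Ω n : Type*} [MeasurableSpace Ω]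
    [Fintype n] [DecidableEq n] {μ : Measure Ω} {w : Ω → ℝ} {Q : Ω → Matrix n n ℝ} {a : ℝ}
    (hint : ∀ i j, Integrable (fun ω => w ω * Q ω i j) μ)
    (hmean : ∀ i j, ∫ ω, w ω * Q ω i j ∂μ = a * (1 : Matrix n n ℝ) i j) (A : Matrix n n ℝ) :
    ∫ ω, (Aᵀ * Q ω).trace * w ω ∂μ = a * A.trace := by
  have hsum : ∀ ω, (Aᵀ * Q ω).trace * w ω = ∑ i, ∑ j, A i j * (w ω * Q ω i j) := fun ω => by
    simp only [trace_transpose_mul_eq_sum, Finset.sum_mul]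
    exact Finset.sum_congr rfl fun i _ => Finset.sum_congr rfl fun j _ => by ring
  calc ∫ ω, (Aᵀ * Q ω).trace * w ω ∂μ = ∫ ω, ∑ i, ∑ j, A i j * (w ω * Q ω i j) ∂μ := by
        simp only [hsum]
    _ = ∑ i, ∑ j, A i j * ∫ ω, w ω * Q ω i j ∂μ := by
        rw [integral_finsetSum (f := fun i ω => ∑ j, A i j * (w ω * Q ω i j)) _ fun i _ =>
          integrable_finsetSum _ fun j _ => (hint i j).const_mul _]
        refine Finset.sum_congr rfl fun i _ => ?_
        rw [integral_finsetSum (f := fun j ω => A i j * (w ω * Q ω i j)) _ fun j _ =>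
          (hint i j).const_mul _]
        simp only [integral_const_mul]
    _ = a * A.trace := by
        simp [hmean, one_apply, trace, Finset.mul_sum, mul_comm]

lemma integral_exp_trace_div_mul_log_div_eq {ν : Measure (Matrix (Fin 3) (Fin 3) ℝ)}
    {X : Matrix (Fin 3) (Fin 3) ℝ} (hmp : MeasurePreserving (fun R => X * R) ν ν)
    (hX : Xᵀ * X = 1) (X' : Matrix (Fin 3) (Fin 3) ℝ) (l : ℝ) {c : ℝ} (hc : c ≠ 0) :
    (∫ R, (Real.exp (l * (Xᵀ * R).trace) / c) *
          Real.log ((Real.exp (l * (Xᵀ * R).trace) / c) /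
            (Real.exp (l * (X'ᵀ * R).trace) / c)) ∂ν) =
      l * ∫ R, (R.trace - ((Xᵀ * X')ᵀ * R).trace) * (Real.exp (l * R.trace) / c) ∂ν := by
  simp only [Real.log_exp_div_div_exp_div hc]
  rw [← hmp.integral_comp_of_aestronglyMeasurable (Continuous.aestronglyMeasurable (by fun_prop)),
    ← integral_const_mul]
  refine integral_congr_ae (Filter.Eventually.of_forall fun R => ?_)
  simp only [← Matrix.mul_assoc, hX, Matrix.one_mul, transpose_mul, transpose_transpose]
  ring

theorem stmt_11_general (ν : Measure (Matrix (Fin 3) (Fin 3) ℝ))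
    (hsupp : ∀ᵐ R ∂ν, IsSO3 R)
    (hinv : ∀ U, IsSO3 U → MeasurePreserving (fun R => U * R) ν ν)
    (X X' : Matrix (Fin 3) (Fin 3) ℝ) (hX : IsSO3 X)
    (l : ℝ)
    (c : ℝ) (hc : c = ∫ R, Real.exp (l * R.trace) ∂ν) (hcpos : 0 < c) :
    (∫ R, (Real.exp (l * (Xᵀ * R).trace) / c) *
          Real.log ((Real.exp (l * (Xᵀ * R).trace) / c) /
            (Real.exp (l * (X'ᵀ * R).trace) / c)) ∂ν) =
        l * ∫ R, (R.trace - ((Xᵀ * X')ᵀ * R).trace) * (Real.exp (l * R.trace) / c) ∂ν ∧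
      ∀ a : ℝ,
        (∀ i j, (∫ R, (Real.exp (l * R.trace) / c) * R i j ∂ν) =
            a * (1 : Matrix (Fin 3) (Fin 3) ℝ) i j) →
        (∫ R, (Real.exp (l * (Xᵀ * R).trace) / c) *
              Real.log ((Real.exp (l * (Xᵀ * R).trace) / c) /
                (Real.exp (l * (X'ᵀ * R).trace) / c)) ∂ν) =
          l * a * (3 - (Xᵀ * X').trace) := by
  have hKL := integral_exp_trace_div_mul_log_div_eq (hinv X hX) hX.1 X' l hcpos.ne'
  refine ⟨hKL, fun a hmean => ?_⟩
  have hortho : ∀ᵐ R ∂ν, Rᵀ * R = 1 := hsupp.mono fun _ hR => hR.1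
  have : IsFiniteMeasure ν :=
    isFiniteMeasure_of_integrable_exp_mul_trace hortho
      (Integrable.of_integral_ne_zero (hc ▸ hcpos.ne'))
  have hexpect := integral_trace_transpose_mul_mul_of_integral_mul_apply
    (integrable_exp_mul_trace_div_mul_apply hortho l c) hmean (1 - Xᵀ * X')
  rw [hKL]
  simp only [trace_sub_trace_transpose_mul]
  rw [hexpect, trace_sub, trace_one, Fintype.card_fin]
  ring

/-- KL divergence between two isotropic Matrix Fisher distributions `M(XλI)` and `M(X'λI)`
on SO(3): with `ν` the Haar measure on SO(3) (left invariant, supported on SO(3)),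
normalizing constant `c`, and `Δ = XᵀX'`,
`D_KL(p_A‖p_B) = λ E_{Q~M(λI)}[tr Q − tr(ΔᵀQ)]`, and if `E_{Q~M(λI)}[Q] = a(λ) I`
then `D_KL(p_A‖p_B) = λ a(λ) (3 − tr Δ)`. -/
theorem stmt_11 (ν : Measure (Matrix (Fin 3) (Fin 3) ℝ))
    (hsupp : ∀ᵐ R ∂ν, IsSO3 R)
    (hinv : ∀ U, IsSO3 U → MeasurePreserving (fun R => U * R) ν ν)
    (X X' : Matrix (Fin 3) (Fin 3) ℝ) (hX : IsSO3 X) (hX' : IsSO3 X')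
    (l : ℝ) (hl : 0 < l)
    (c : ℝ) (hc : c = ∫ R, Real.exp (l * R.trace) ∂ν) (hcpos : 0 < c) :
    (∫ R, (Real.exp (l * (Xᵀ * R).trace) / c) *
          Real.log ((Real.exp (l * (Xᵀ * R).trace) / c) /
            (Real.exp (l * (X'ᵀ * R).trace) / c)) ∂ν) =
        l * ∫ R, (R.trace - ((Xᵀ * X')ᵀ * R).trace) * (Real.exp (l * R.trace) / c) ∂ν ∧
      ∀ a : ℝ,
        (∀ i j, (∫ R, (Real.exp (l * R.trace) / c) * R i j ∂ν) =
            a * (1 : Matrix (Fin 3) (Fin 3) ℝ) i j) →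
        (∫ R, (Real.exp (l * (Xᵀ * R).trace) / c) *
              Real.log ((Real.exp (l * (Xᵀ * R).trace) / c) /
                (Real.exp (l * (X'ᵀ * R).trace) / c)) ∂ν) =
          l * a * (3 - (Xᵀ * X').trace) :=
  stmt_11_general ν hsupp hinv X X' hX l c hc hcpos
end

section
/- For the softmax map applied to y ∈ ℝ^K, if y ~ N(β(Ke_c − 1), βKI) for β > 0 and e_c the c-th standard basis vector, then as β → ∞, softmax(y) converges in probability to e_c. -/
open MeasureTheory ProbabilityTheory Filter

/-- Softmax map on `ℝ^K`. -/
noncomputable def softmax {K : ℕ} (y : Fin K → ℝ) : Fin K → ℝ :=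
  fun k => Real.exp (y k) / ∑ j, Real.exp (y j)

/-!
Coordinate `k` of `y` has mean `β K 1[k = c] - β` and variance `β K`. With probability at least
`1 - 16 / β` (Chebyshev plus a union bound) every coordinate lies within `β K / 4` of its mean,
so `y c` exceeds every other coordinate by at least `β K / 2`; on that event `softmax y` is
within `K exp (-β K / 2)` of `e_c`.
-/

section Softmax

variable {K : ℕ}

lemma softmax_nonneg (y : Fin K → ℝ) (k : Fin K) : 0 ≤ softmax y k := by
  unfold softmax; positivity

lemma sum_softmax [NeZero K] (y : Fin K → ℝ) : ∑ k, softmax y k = 1 := by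
  simp only [softmax, ← Finset.sum_div]
  exact div_self (Finset.sum_pos (fun j _ => Real.exp_pos (y j)) Finset.univ_nonempty).ne'

lemma softmax_le_exp_sub (y : Fin K → ℝ) (i c : Fin K) :
    softmax y i ≤ Real.exp (y i - y c) := by
  rw [softmax, Real.exp_sub]
  exact div_le_div_of_nonneg_left (Real.exp_pos _).le (Real.exp_pos _)
    (Finset.single_le_sum (fun j _ => (Real.exp_pos (y j)).le) (Finset.mem_univ c))

lemma dist_softmax_le_sum_erase (y : Fin K → ℝ) (c : Fin K) :
    dist (softmax y) (fun k => if k = c then (1 : ℝ) else 0)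
      ≤ ∑ j ∈ Finset.univ.erase c, softmax y j := by
  have : NeZero K := NeZero.of_pos c.pos
  have hmass : 1 - softmax y c = ∑ j ∈ Finset.univ.erase c, softmax y j := by
    rw [Finset.sum_erase_eq_sub (Finset.mem_univ c), sum_softmax]
  have hoff : 0 ≤ ∑ j ∈ Finset.univ.erase c, softmax y j :=
    Finset.sum_nonneg fun j _ => softmax_nonneg y j
  refine (dist_pi_le_iff hoff).2 fun i => ?_
  rw [Real.dist_eq]
  by_cases hi : i = c
  · subst hi
    rw [if_pos rfl, abs_sub_comm, abs_of_nonneg (by rw [hmass]; exact hoff), hmass]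
  · rw [if_neg hi, sub_zero, abs_of_nonneg (softmax_nonneg y i)]
    exact Finset.single_le_sum (fun j _ => softmax_nonneg y j)
      (Finset.mem_erase.2 ⟨hi, Finset.mem_univ i⟩)

lemma dist_softmax_le_of_forall_le_sub (y : Fin K → ℝ) (c : Fin K) (M : ℝ)
    (h : ∀ j, j ≠ c → y j ≤ y c - M) :
    dist (softmax y) (fun k => if k = c then (1 : ℝ) else 0) ≤ K * Real.exp (-M) := by
  have hterm : ∀ j ∈ Finset.univ.erase c, softmax y j ≤ Real.exp (-M) := fun j hj =>
    (softmax_le_exp_sub y j c).trans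
      (Real.exp_le_exp.2 (by linarith [h j (Finset.ne_of_mem_erase hj)]))
  have hcard : ((Finset.univ.erase c).card : ℝ) ≤ K := by
    exact_mod_cast (Finset.card_erase_le).trans (Finset.card_fin K).le
  calc dist (softmax y) (fun k => if k = c then (1 : ℝ) else 0)
      ≤ ∑ j ∈ Finset.univ.erase c, softmax y j := dist_softmax_le_sum_erase y c
    _ ≤ (Finset.univ.erase c).card * Real.exp (-M) := by
        simpa using Finset.sum_le_card_nsmul _ _ _ hterm
    _ ≤ K * Real.exp (-M) := by gcongr

lemma dist_softmax_le_of_abs_sub_lt (c : Fin K) {β : ℝ} {y : Fin K → ℝ}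
    (hy : ∀ k, |y k - β * ((K : ℝ) * (if k = c then (1 : ℝ) else 0) - 1)| < β * K / 4) :
    dist (softmax y) (fun k => if k = c then (1 : ℝ) else 0)
      ≤ K * Real.exp (-(β * K / 2)) := by
  refine dist_softmax_le_of_forall_le_sub y c _ fun j hj => ?_
  have hyj := abs_lt.1 (hy j)
  have hyc := abs_lt.1 (hy c)
  simp only [if_neg hj, ↓reduceIte, mul_zero, zero_sub, mul_one, mul_neg, mul_sub] at hyj hyc
  linarith [hyj.2, hyc.1]

end Softmax

section Gaussian

open scoped NNReal

lemma gaussianReal_le_abs_sub_le (m : ℝ) (v : ℝ≥0) {a : ℝ} (ha : 0 < a) :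
    gaussianReal m v {x | a ≤ |x - m|} ≤ ENNReal.ofReal (v / a ^ 2) := by
  simpa [integral_id_gaussianReal, variance_id_gaussianReal] using
    meas_ge_le_variance_div_sq (memLp_id_gaussianReal (μ := m) (v := v) 2) ha

lemma measure_pi_exists_mem_le_sum {ι α : Type*} [Fintype ι] [MeasurableSpace α]
    (μ : ι → Measure α) [∀ i, IsProbabilityMeasure (μ i)] {s : ι → Set α}
    (hs : ∀ i, MeasurableSet (s i)) :
    Measure.pi μ {y | ∃ i, y i ∈ s i} ≤ ∑ i, μ i (s i) := by
  have hunion : {y : ι → α | ∃ i, y i ∈ s i} = ⋃ i, Function.eval i ⁻¹' s i := by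
    ext y; simp
  rw [hunion]
  refine (measure_iUnion_fintype_le _ _).trans_eq (Finset.sum_congr rfl fun i _ => ?_)
  exact (measurePreserving_eval μ i).measure_preimage (hs i).nullMeasurableSet

lemma measure_pi_gaussianReal_exists_le_abs_sub_le {ι : Type*} [Fintype ι] (m : ι → ℝ)
    (v : ℝ≥0) {a : ℝ} (ha : 0 < a) :
    Measure.pi (fun i => gaussianReal (m i) v) {y | ∃ i, a ≤ |y i - m i|}
      ≤ Fintype.card ι * ENNReal.ofReal (v / a ^ 2) := by
  calc Measure.pi (fun i => gaussianReal (m i) v) {y | ∃ i, a ≤ |y i - m i|}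
      ≤ ∑ i, gaussianReal (m i) v {x | a ≤ |x - m i|} :=
        measure_pi_exists_mem_le_sum _ (s := fun i => {x | a ≤ |x - m i|})
          fun i => measurableSet_le measurable_const (measurable_id.sub_const _).abs
    _ ≤ ∑ _i : ι, ENNReal.ofReal (v / a ^ 2) :=
        Finset.sum_le_sum fun i _ => gaussianReal_le_abs_sub_le (m i) v ha
    _ = Fintype.card ι * ENNReal.ofReal (v / a ^ 2) := by simp

end Gaussian

theorem stmt_18_general (K : ℕ) (c : Fin K) :
    ∀ ε > (0 : ℝ),
      Tendsto
        (fun β : ℝ =>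
          (Measure.pi fun k : Fin K =>
              gaussianReal (β * ((K : ℝ) * (if k = c then (1 : ℝ) else 0) - 1))
                (Real.toNNReal (β * K)))
            {y : Fin K → ℝ |
              ε ≤ dist (softmax y) (fun k => if k = c then (1 : ℝ) else 0)})
        atTop (nhds 0) := by
  intro ε hε
  have hK : (0 : ℝ) < K := by exact_mod_cast c.pos
  have hβK : Tendsto (fun β : ℝ => β * K) atTop atTop := tendsto_id.atTop_mul_const hK
  have hgap : Tendsto (fun β : ℝ => K * Real.exp (-(β * K / 2))) atTop (nhds 0) := by
    simpa using (Real.tendsto_exp_neg_atTop_nhds_zero.comp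
      (hβK.atTop_div_const two_pos)).const_mul (K : ℝ)
  have hrate :
      Tendsto (fun β : ℝ => (K : ENNReal) * ENNReal.ofReal (16 / (β * K))) atTop (nhds 0) := by
    simpa using ENNReal.Tendsto.const_mul (ENNReal.tendsto_ofReal
      (tendsto_const_nhds.div_atTop hβK)) (Or.inr (ENNReal.natCast_ne_top K))
  refine tendsto_of_tendsto_of_tendsto_of_le_of_le' tendsto_const_nhds hrate
    (Eventually.of_forall fun β => zero_le) ?_
  filter_upwards [eventually_gt_atTop 0, hgap.eventually_lt_const hε] with β hβ hβε
  have hquarter : (0 : ℝ) < β * K / 4 := by positivity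
  refine (measure_mono fun y hy => ?_).trans
    ((measure_pi_gaussianReal_exists_le_abs_sub_le _ _ hquarter).trans_eq ?_)
  · by_contra hdev
    simp only [Set.mem_ofPred_eq, not_exists, not_le] at hdev
    exact absurd (hy.trans (dist_softmax_le_of_abs_sub_lt c hdev)) (not_le.2 hβε)
  · rw [Fintype.card_fin, Real.coe_toNNReal _ (by positivity)]
    congr 2
    field_simp
    ring

/-- If `y ~ N(β(K e_c − 1), βK I)` then, as `β → ∞`, `softmax(y)` converges in probability
to the one-hot vector `e_c`. -/
theorem stmt_18 (K : ℕ) (hK : 0 < K) (c : Fin K) :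
    ∀ ε > (0 : ℝ),
      Tendsto
        (fun β : ℝ =>
          (Measure.pi fun k : Fin K =>
              gaussianReal (β * ((K : ℝ) * (if k = c then (1 : ℝ) else 0) - 1))
                (Real.toNNReal (β * K)))
            {y : Fin K → ℝ |
              ε ≤ dist (softmax y) (fun k => if k = c then (1 : ℝ) else 0)})
        atTop (nhds 0) :=
  stmt_18_general K c
end
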